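/- arXiv:1302.2769 — 4 statements merged into one kernel-verified Lean document; each statement's English description precedes it below -/
import Mathlib

section
/- Let u : ℝ × ℝ → ℝ be supermodular. Suppose for parameters θ < θ̂ that x̂ is a global maximiser of x ↦ u(x, θ̂) - ψ(x) over an interval I. Then for every x > x̂ in I, u(x̂, θ) - ψ(x̂) ≥ u(x, θ) - ψ(x). Consequently sup_{x ∈ I} (u(x,θ) - ψ(x)) = sup_{x ∈ I, x ≤ x̂} (u(x,θ) - ψ(x)). -/
/-- If `x̂` maximises `u(·,θ̂) - ψ` over `I` and `θ < θ̂`, then for the smaller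
parameter `θ` no point of `I` above `x̂` beats `x̂`, so the supremum over `I`
equals the supremum over points of `I` below `x̂`. -/
theorem stmt2 (u : ℝ → ℝ → ℝ) (ψ : ℝ → ℝ) (I : Set ℝ) (θ θhat xhat : ℝ)
    (hsm : ∀ x x' t t', x ≤ x' → t ≤ t' → u x t' - u x t ≤ u x' t' - u x' t)
    (hθ : θ < θhat) (hxI : xhat ∈ I)
    (hmax : ∀ x ∈ I, u x θhat - ψ x ≤ u xhat θhat - ψ xhat) :
    (∀ x ∈ I, xhat < x → u xhat θ - ψ xhat ≥ u x θ - ψ x) ∧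
    sSup ((fun x => u x θ - ψ x) '' I)
      = sSup ((fun x => u x θ - ψ x) '' {y | y ∈ I ∧ y ≤ xhat}) := by
  have key : ∀ x ∈ I, xhat < x → u xhat θ - ψ xhat ≥ u x θ - ψ x := by
    intro x hx hlt
    have h1 := hsm xhat x θ θhat hlt.le hθ.le
    have h2 := hmax x hx
    linarith
  refine ⟨key, csSup_eq_csSup_of_forall_exists_le ?_ ?_⟩
  · rintro v ⟨x, hx, rfl⟩
    rcases le_or_gt x xhat with h | h
    · exact ⟨_, ⟨x, ⟨hx, h⟩, rfl⟩, le_rfl⟩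
    · exact ⟨_, ⟨xhat, ⟨hxI, le_rfl⟩, rfl⟩, key x hx h⟩
  · rintro v ⟨x, ⟨hx, _⟩, rfl⟩
    exact ⟨_, ⟨x, hx, rfl⟩, le_rfl⟩
end

section
/- Let φ : I → (0,∞) be strictly increasing and φ̃ : I → (0,∞) strictly decreasing on an interval I, and let U : I → (0,∞). Suppose x maximises U/φ over I and y maximises U/φ̃ over I. Then x ≤ y. -/
/-- A global maximiser of `U/φ` (φ strictly increasing) lies weakly to the left of a
global maximiser of `U/φ̃` (φ̃ strictly decreasing). -/
theorem stmt3 (I : Set ℝ) (φ φt U : ℝ → ℝ)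
    (hφ : StrictMonoOn φ I) (hφt : StrictAntiOn φt I)
    (hφpos : ∀ z ∈ I, 0 < φ z) (hφtpos : ∀ z ∈ I, 0 < φt z)
    (hU : ∀ z ∈ I, 0 < U z)
    (x y : ℝ) (hxI : x ∈ I) (hyI : y ∈ I)
    (hx : ∀ z ∈ I, U z / φ z ≤ U x / φ x)
    (hy : ∀ z ∈ I, U z / φt z ≤ U y / φt y) :
    x ≤ y := by
  by_contra h
  push_neg at h
  have h1 := hx y hyI
  have h2 := hy x hxI
  have hφxy : φ y < φ x := hφ hyI hxI h
  have hφtxy : φt x < φt y := hφt hyI hxI h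
  have hpx := hφpos x hxI
  have hpy := hφpos y hyI
  have hptx := hφtpos x hxI
  have hpty := hφtpos y hyI
  have hUx := hU x hxI
  have hUy := hU y hyI
  rw [div_le_div_iff₀ hpy hpx] at h1
  rw [div_le_div_iff₀ hptx hpty] at h2
  nlinarith [mul_le_mul h1 h2 (by positivity) (by positivity),
    mul_lt_mul'' hφxy hφtxy (le_of_lt hpy) (le_of_lt hptx), mul_pos hUx hUy]
end

section
/- Let u : ℝ² → ℝ be strictly supermodular. Let f : ℝ → ℝ be u-subdifferentiable at every point, and suppose z ∈ ∂^u f(y) and z' ∈ ∂^u f(y') with y < y'. Then z ≤ z'. -/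
/-- For a strictly supermodular `u`, elements of the u-subdifferential of a
u-subdifferentiable function are monotone in the base point. -/
theorem stmt10 (u : ℝ → ℝ → ℝ) (f : ℝ → ℝ)
    (hsm : ∀ x x' θ θ', x < x' → θ < θ' → u x θ' + u x' θ < u x' θ' + u x θ)
    (hsub : ∀ y : ℝ, ∃ w : ℝ, ∀ yhat : ℝ, u yhat w - f yhat ≤ u y w - f y)
    (y y' z z' : ℝ) (hyy : y < y')
    (hz : ∀ yhat, u yhat z - f yhat ≤ u y z - f y)
    (hz' : ∀ yhat, u yhat z' - f yhat ≤ u y' z' - f y') :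
    z ≤ z' := by
  by_contra h
  push_neg at h
  have h1 := hz y'
  have h2 := hz' y
  have h3 := hsm y y' z' z hyy h
  linarith
end

section
/- Let k > 0 and define V(θ) = (kθ/(k+1))^k · θ/(k+1) + 1 for θ ∈ (0, (k+1)/k]. For each x ∈ (0,1], the supremum over θ ∈ (0,(k+1)/k] of log(θ - x) - log(V(θ) - 1) equals log(x^{-k}) and is attained uniquely at θ*(x) = x(k+1)/k. -/
/-!
Substituting `t = kθ/(k+1)` turns `V θ - 1` into `t^(k+1)/k` and `θ - x` into
`((k+1)t - kx)/k`, so the claim becomes `(k+1) x^k t - k x^(k+1) ≤ t^(k+1)` with equality only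
at `t = x`: the graph of the strictly convex function `t ↦ t^(k+1)` lies strictly above its
tangent line at `x`, which is Bernoulli's inequality after scaling by `x`.
-/

open Real

theorem rpow_tangent_lt {p x t : ℝ} (hp : 1 < p) (hx : 0 < x) (ht : 0 ≤ t) (hne : t ≠ x) :
    x ^ (p - 1) * (p * t - (p - 1) * x) < t ^ p := by
  have hbernoulli : 1 + p * (t / x - 1) < (1 + (t / x - 1)) ^ p :=
    one_add_mul_self_lt_rpow_one_add (by have := div_nonneg ht hx.le; linarith)
      (by rwa [sub_ne_zero, ne_eq, div_eq_one_iff_eq hx.ne']) hp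
  rw [add_sub_cancel, div_rpow ht hx.le, lt_div_iff₀ (rpow_pos_of_pos hx p)] at hbernoulli
  calc x ^ (p - 1) * (p * t - (p - 1) * x) = (1 + p * (t / x - 1)) * x ^ p := by
        rw [rpow_sub_one hx.ne']; field_simp; ring
    _ < t ^ p := hbernoulli

section
variable {k x θ : ℝ}

theorem sub_lt_rpow_neg_mul (hk : 0 < k) (hx : 0 < x) (hθ : 0 ≤ θ) (hne : θ ≠ x * (k + 1) / k) :
    θ - x < x ^ (-k) * ((k * θ / (k + 1)) ^ k * (θ / (k + 1))) := by
  set t := k * θ / (k + 1) with ht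
  have hθt : θ = t * (k + 1) / k := by rw [ht]; field_simp
  have htx : t ≠ x := by rintro rfl; exact hne hθt
  have ht0 : 0 ≤ t := by positivity
  have htangent := rpow_tangent_lt (p := k + 1) (by linarith) hx ht0 htx
  rw [add_sub_cancel_right] at htangent
  calc θ - x = (x ^ k)⁻¹ * (x ^ k * ((k + 1) * t - k * x) / k) := by
        rw [hθt]; field_simp
    _ < (x ^ k)⁻¹ * (t ^ (k + 1) / k) := by gcongr
    _ = x ^ (-k) * (t ^ k * (θ / (k + 1))) := by
        rw [rpow_neg hx.le, rpow_add_one' ht0 (by linarith), hθt]; field_simp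

theorem sub_eq_rpow_neg_mul (hk : 0 < k) (hx : 0 < x) :
    x * (k + 1) / k - x =
      x ^ (-k) * ((k * (x * (k + 1) / k) / (k + 1)) ^ k * (x * (k + 1) / k / (k + 1))) := by
  have hθx : k * (x * (k + 1) / k) / (k + 1) = x := by field_simp
  have hxk : x ^ k ≠ 0 := (rpow_pos_of_pos hx k).ne'
  rw [hθx, rpow_neg hx.le]
  field_simp
  ring

end

theorem log_sub_log_lt_of_lt_mul {a b c : ℝ} (ha : 0 < a) (hb : 0 < b) (h : a < c * b) :
    log a - log b < log c := by
  rw [← log_div ha.ne' hb.ne']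
  exact log_lt_log (div_pos ha hb) ((div_lt_iff₀ hb).2 h)

/-- Inverse problem computation: for each `x ∈ (0,1]`, the supremum over
`θ ∈ (0,(k+1)/k]` of `log(θ-x) - log(V(θ)-1)` equals `log(x^{-k})` and is attained
uniquely at `θ*(x) = x(k+1)/k`. -/
theorem stmt18 (k : ℝ) (hk : 0 < k) (V : ℝ → ℝ)
    (hV : ∀ θ, V θ = (k*θ/(k+1)) ^ k * (θ/(k+1)) + 1) :
    ∀ x ∈ Set.Ioc (0:ℝ) 1,
      x*(k+1)/k ∈ Set.Ioc (0:ℝ) ((k+1)/k) ∧ x < x*(k+1)/k ∧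
      Real.log (x*(k+1)/k - x) - Real.log (V (x*(k+1)/k) - 1) = Real.log (x ^ (-k)) ∧
      (∀ θ ∈ Set.Ioc (0:ℝ) ((k+1)/k), x < θ → θ ≠ x*(k+1)/k →
        Real.log (θ - x) - Real.log (V θ - 1) < Real.log (x ^ (-k))) := by
  rintro x ⟨hx0, hx1⟩
  refine ⟨⟨by positivity, ?_⟩, ?_, ?_, fun θ ⟨hθ0, _⟩ hxθ hne => ?_⟩
  · exact div_le_div_of_nonneg_right (mul_le_of_le_one_left (by linarith) hx1) hk.le
  · rw [lt_div_iff₀ hk]; linarith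
  · rw [hV, add_sub_cancel_right, sub_eq_rpow_neg_mul hk hx0,
      log_mul (rpow_pos_of_pos hx0 _).ne' (by positivity), add_sub_cancel_right]
  · rw [hV, add_sub_cancel_right]
    exact log_sub_log_lt_of_lt_mul (by linarith) (by positivity)
      (sub_lt_rpow_neg_mul hk hx0 hθ0.le hne)
end
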